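/- Let λ_1,…,λ_d > 0, n ∈ ℕ, and b, d, σ² > 0, and define h(α) = Σ_{k=1}^d (σ²λ_k + (b/d)n²α²)/((λ_k + nα)²) for α > 0. Then h'(α) = 2n·(α n b/d − σ²·(d/d))·Σ_k λ_k/(λ_k+nα)³ vanishes only at α* = dσ²/(nb), h attains its minimum on (0,∞) at α* = dσ²/(nb), and h(α*) = Σ_{k=1}^d σ²/(λ_k + nα*). -/

import Mathlib

/-!
Writing `t = nα` and `c = b/d`, the optimum satisfies `σ² = c·t*` with `t* = nα*`, and each summand
of `h` splits as
`(σ²λ + c t²)/(λ + t)² = σ²/(λ + t*) + c λ (t - t*)² / ((λ + t)² (λ + t*))`.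
The second term is nonnegative and vanishes exactly at `t = t*`, which gives both the minimum and
its value. The derivative factors as `2n(αnc - σ²)` times the positive sum `Σ λ_k/(λ_k + nα)³`.
-/

open Finset

section RidgeTerm

variable (s c n l : ℝ)

theorem hasDerivAt_ridgeTerm {α : ℝ} (hα : l + n * α ≠ 0) :
    HasDerivAt (fun α : ℝ => (s * l + c * n ^ 2 * α ^ 2) / (l + n * α) ^ 2)
      (2 * n * (α * n * c - s) * (l / (l + n * α) ^ 3)) α := by
  have hnum : HasDerivAt (fun α : ℝ => s * l + c * n ^ 2 * α ^ 2) (c * n ^ 2 * (2 * α)) α := by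
    simpa using ((hasDerivAt_pow 2 α).const_mul (c * n ^ 2)).const_add (s * l)
  have hlin : HasDerivAt (fun α : ℝ => l + n * α) n α := by
    simpa using ((hasDerivAt_id α).const_mul n).const_add l
  refine (hnum.fun_div (hlin.fun_pow 2) (pow_ne_zero 2 hα)).congr_deriv ?_
  field_simp
  ring

theorem ridgeTerm_eq_add {α α' : ℝ} (hs : s = c * n * α') (hα : l + n * α ≠ 0)
    (hα' : l + n * α' ≠ 0) :
    (s * l + c * n ^ 2 * α ^ 2) / (l + n * α) ^ 2 =
      s / (l + n * α') + c * l * (n * (α - α')) ^ 2 / ((l + n * α) ^ 2 * (l + n * α')) := by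
  subst hs
  field_simp
  ring

theorem ridgeTerm_at_opt {α' : ℝ} (hs : s = c * n * α') (hα' : l + n * α' ≠ 0) :
    (s * l + c * n ^ 2 * α' ^ 2) / (l + n * α') ^ 2 = s / (l + n * α') := by
  simp [ridgeTerm_eq_add s c n l hs hα' hα']

theorem ridgeTerm_opt_le {α α' : ℝ} (hs : s = c * n * α') (hc : 0 ≤ c) (hl : 0 ≤ l)
    (hα : l + n * α ≠ 0) (hα' : 0 < l + n * α') :
    s / (l + n * α') ≤ (s * l + c * n ^ 2 * α ^ 2) / (l + n * α) ^ 2 := by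
  rw [ridgeTerm_eq_add s c n l hs hα hα'.ne']
  exact le_add_of_nonneg_right (by positivity)

end RidgeTerm

/-- Optimal ridge tuning (Appendix C.1): for
`h(α) = Σ_k (σ²λ_k + (b/d)n²α²)/((λ_k + nα)²)` with `λ_k > 0`, the derivative is
`2n(αnb/d − σ²)·Σ_k λ_k/(λ_k + nα)³`, which vanishes on `(0,∞)` only at
`α* = dσ²/(nb)`; `h` attains its minimum on `(0,∞)` at `α*`, and
`h(α*) = Σ_k σ²/(λ_k + nα*)`. -/
theorem stmt19 (d n : ℕ) (hd : 0 < d) (hn : 0 < n)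
    (lam : Fin d → ℝ) (hlam : ∀ k, 0 < lam k)
    (b sigSq : ℝ) (hb : 0 < b) (hsig : 0 < sigSq)
    (h : ℝ → ℝ)
    (hh : ∀ α : ℝ, h α = ∑ k : Fin d,
      (sigSq * lam k + (b / (d : ℝ)) * (n : ℝ) ^ 2 * α ^ 2) /
        (lam k + (n : ℝ) * α) ^ 2)
    (αstar : ℝ) (hαstar : αstar = (d : ℝ) * sigSq / ((n : ℝ) * b)) :
    (∀ α : ℝ, 0 < α → HasDerivAt h
      (2 * (n : ℝ) * (α * (n : ℝ) * b / (d : ℝ) - sigSq) *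
        ∑ k : Fin d, lam k / (lam k + (n : ℝ) * α) ^ 3) α) ∧
    (∀ α : ℝ, 0 < α → (deriv h α = 0 ↔ α = αstar)) ∧
    (∀ α : ℝ, 0 < α → h αstar ≤ h α) ∧
    h αstar = ∑ k : Fin d, sigSq / (lam k + (n : ℝ) * αstar) := by
  have hdR : (0 : ℝ) < d := by exact_mod_cast hd
  have hnR : (0 : ℝ) < n := by exact_mod_cast hn
  have hden : ∀ k {α : ℝ}, 0 < α → 0 < lam k + n * α := fun k α hα => by
    have := hlam k; positivity
  have hαs : 0 < αstar := by rw [hαstar]; positivity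
  have hs : sigSq = b / d * n * αstar := by rw [hαstar]; field_simp
  have hderiv : ∀ α : ℝ, 0 < α → HasDerivAt h
      (2 * (n : ℝ) * (α * (n : ℝ) * b / (d : ℝ) - sigSq) *
        ∑ k : Fin d, lam k / (lam k + (n : ℝ) * α) ^ 3) α := fun α hα => by
    rw [funext hh, mul_div_assoc, mul_sum]
    exact HasDerivAt.fun_sum fun k _ => hasDerivAt_ridgeTerm _ _ _ _ (hden k hα).ne'
  have hval : h αstar = ∑ k : Fin d, sigSq / (lam k + (n : ℝ) * αstar) := by
    rw [hh]
    exact sum_congr rfl fun k _ => ridgeTerm_at_opt _ _ _ _ hs (hden k hαs).ne'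
  refine ⟨hderiv, fun α hα => ?_, fun α hα => ?_, hval⟩
  · have hsum : 0 < ∑ k : Fin d, lam k / (lam k + (n : ℝ) * α) ^ 3 :=
      sum_pos (fun k _ => div_pos (hlam k) (pow_pos (hden k hα) 3)) (univ_nonempty_iff.2 ⟨⟨0, hd⟩⟩)
    have hfactor : α * n * b / d - sigSq = b / d * n * (α - αstar) := by rw [hs]; ring
    rw [(hderiv α hα).deriv, mul_eq_zero_iff_right hsum.ne', hfactor]
    simp [hnR.ne', hb.ne', hdR.ne', sub_eq_zero]
  · rw [hval, hh]
    exact sum_le_sum fun k _ => ridgeTerm_opt_le _ _ _ _ hs (by positivity) (hlam k).le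
      (hden k hα).ne' (hden k hαs)
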